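/- Suppose c^I_t = c^I ≥ 0 and c^B_t = c^B ≥ 0 for all t. Let x' be a plan with x'_t ≥ 0 for all t, with cumulative levels X'_t = Σ_{i=1}^t x'_i, and define X''_t as the clamping of X'_t into [D_t(S⁻), D_t(S⁺)], i.e. X''_t = D_t(S⁻) if X'_t < D_t(S⁻), X''_t = X'_t if D_t(S⁻) ≤ X'_t ≤ D_t(S⁺), and X''_t = D_t(S⁺) if X'_t > D_t(S⁺). Then (i) the sequence (X''_t) is nondecreasing in t, so the corresponding plan x'' (with x''_1 = X''_1, x''_t = X''_t − X''_{t−1}) is feasible, and (ii) max_{S ∈ Γ} Σ_{t=1}^T max{c^I(X''_t − D_t(S)), c^B(D_t(S) − X''_t)} ≤ max_{S ∈ Γ} Σ_{t=1}^T max{c^I(X'_t − D_t(S)), c^B(D_t(S) − X'_t)}. -/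
import Mathlib


/-- Cumulative sum up to period `t`. -/
noncomputable def cum {T : ℕ} (x : Fin T → ℝ) (t : Fin T) : ℝ :=
  ∑ i ∈ Finset.Iic t, x i

/-- Total cost of a cumulative production profile `Xp` under scenario `S`
with uniform unit costs. -/
noncomputable def profCost {T : ℕ} (cI cB : ℝ) (Xp : Fin T → ℝ) (S : Fin T → ℝ) : ℝ :=
  ∑ t : Fin T, max (cI * (Xp t - cum S t)) (cB * (cum S t - Xp t))

/-- The scenario box `Γ = ∏_t [d⁻_t, d⁺_t]`. -/
def scenarioBox {T : ℕ} (dlo dhi : Fin T → ℝ) : Set (Fin T → ℝ) :=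
  Set.univ.pi fun t => Set.Icc (dlo t) (dhi t)

/-- Clamping of `v` into the interval `[lo, hi]`. -/
noncomputable def clamp (lo hi v : ℝ) : ℝ := max lo (min v hi)

lemma cum_mono {T : ℕ} (x : Fin T → ℝ) (hx : ∀ t, 0 ≤ x t) {s t : Fin T} (h : s ≤ t) :
    cum x s ≤ cum x t := by
  apply Finset.sum_le_sum_of_subset_of_nonneg (Finset.Iic_subset_Iic.2 h)
  intro i _ _; exact hx i

lemma cum_le_cum {T : ℕ} {x y : Fin T → ℝ} (h : ∀ t, x t ≤ y t) (t : Fin T) :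
    cum x t ≤ cum y t :=
  Finset.sum_le_sum fun i _ => h i

lemma key_term (cI cB lo hi D X : ℝ) (hcI : 0 ≤ cI) (hcB : 0 ≤ cB) (hlh : lo ≤ hi)
    (hD1 : lo ≤ D) (hD2 : D ≤ hi) :
    max (cI * (clamp lo hi X - D)) (cB * (D - clamp lo hi X)) ≤
      max (cI * (X - D)) (cB * (D - X)) := by
  unfold clamp
  rcases le_total X lo with h | h
  · rw [min_eq_left (h.trans hlh), max_eq_left h]
    apply max_le
    · have h1 : cI * (lo - D) ≤ 0 := mul_nonpos_of_nonneg_of_nonpos hcI (by linarith)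
      have h2 : (0 : ℝ) ≤ cB * (D - X) := mul_nonneg hcB (by linarith)
      exact le_max_of_le_right (h1.trans h2)
    · exact le_max_of_le_right (mul_le_mul_of_nonneg_left (by linarith) hcB)
  · rcases le_total hi X with h' | h'
    · rw [min_eq_right h', max_eq_right hlh]
      apply max_le
      · exact le_max_of_le_left (mul_le_mul_of_nonneg_left (by linarith) hcI)
      · have h1 : cB * (D - hi) ≤ 0 := mul_nonpos_of_nonneg_of_nonpos hcB (by linarith)
        have h2 : (0 : ℝ) ≤ cI * (X - D) := mul_nonneg hcI (by linarith)
        exact le_max_of_le_left (h1.trans h2)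
    · rw [min_eq_left h', max_eq_right h]

/-- with uniform costs, let `x'` be a nonnegative plan with cumulative
levels `X'_t`, and let `X''_t` be the clamping of `X'_t` into `[D_t(S⁻), D_t(S⁺)]`.
Then (i) `(X''_t)` is nondecreasing in `t` and nonnegative (so the corresponding plan
`x''` is feasible), and (ii) the worst-case cost of profile `X''` over `Γ` does not
exceed that of `X'`. -/
theorem stmt9 {T : ℕ} (cI cB : ℝ) (hcI : 0 ≤ cI) (hcB : 0 ≤ cB)
    (dlo dhi : Fin T → ℝ) (hd0 : ∀ t, 0 ≤ dlo t) (hdd : ∀ t, dlo t ≤ dhi t)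
    (x' : Fin T → ℝ) (hx' : ∀ t, 0 ≤ x' t) :
    (∀ s t : Fin T, s ≤ t →
        clamp (cum dlo s) (cum dhi s) (cum x' s) ≤ clamp (cum dlo t) (cum dhi t) (cum x' t)) ∧
    (∀ t : Fin T, 0 ≤ clamp (cum dlo t) (cum dhi t) (cum x' t)) ∧
    sSup (profCost cI cB (fun t => clamp (cum dlo t) (cum dhi t) (cum x' t)) ''
        scenarioBox dlo dhi) ≤
      sSup (profCost cI cB (fun t => cum x' t) '' scenarioBox dlo dhi) := by
  have hcumS : ∀ S ∈ scenarioBox dlo dhi, ∀ t : Fin T,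
      cum dlo t ≤ cum S t ∧ cum S t ≤ cum dhi t := by
    intro S hS t
    exact ⟨cum_le_cum (fun i => (hS i trivial).1) t, cum_le_cum (fun i => (hS i trivial).2) t⟩
  have hbox : (scenarioBox dlo dhi).Nonempty :=
    ⟨dlo, fun t _ => ⟨le_refl _, hdd t⟩⟩
  -- pointwise cost comparison
  have hptwise : ∀ S ∈ scenarioBox dlo dhi,
      profCost cI cB (fun t => clamp (cum dlo t) (cum dhi t) (cum x' t)) S ≤
        profCost cI cB (fun t => cum x' t) S := by
    intro S hS
    apply Finset.sum_le_sum
    intro t _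
    exact key_term cI cB _ _ _ _ hcI hcB (cum_le_cum hdd t)
      (hcumS S hS t).1 (hcumS S hS t).2
  -- bounded above
  have hbdd : BddAbove (profCost cI cB (fun t => cum x' t) '' scenarioBox dlo dhi) := by
    refine ⟨∑ t : Fin T, max (cI * (cum x' t - cum dlo t)) (cB * (cum dhi t - cum x' t)), ?_⟩
    rintro _ ⟨S, hS, rfl⟩
    apply Finset.sum_le_sum
    intro t _
    exact max_le_max (mul_le_mul_of_nonneg_left (by linarith [(hcumS S hS t).1]) hcI)
      (mul_le_mul_of_nonneg_left (by linarith [(hcumS S hS t).2]) hcB)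
  refine ⟨?_, ?_, ?_⟩
  · intro s t hst
    unfold clamp
    exact max_le_max (cum_mono dlo hd0 hst)
      (min_le_min (cum_mono x' hx' hst) (cum_mono dhi (fun i => (hd0 i).trans (hdd i)) hst))
  · intro t
    have : (0 : ℝ) ≤ cum dlo t := Finset.sum_nonneg fun i _ => hd0 i
    exact this.trans (le_max_left _ _)
  · apply csSup_le (hbox.image _)
    rintro _ ⟨S, hS, rfl⟩
    exact (hptwise S hS).trans (le_csSup hbdd ⟨S, hS, rfl⟩)
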